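/- arXiv:1303.7122 — 3 statements merged into one kernel-verified Lean document; each statement's English description precedes it below -/
import Mathlib

section
/- For subsets X, Z of A = {1, ..., n}, X ⊆' Z (Z is reachable from X by a sequence of left-shifts) if and only if for all a ∈ A, |{b ∈ X : b ≥ a}| ≤ |{b ∈ Z : b ≥ a}|. -/
/-- The ground set A = {1, ..., n}. -/
def grnd (n : ℕ) : Finset ℕ := Finset.Icc 1 n

/-- Number of elements of X that are ≥ a. -/
def cnt (X : Finset ℕ) (a : ℕ) : ℕ := (X.filter (fun b => a ≤ b)).card

/-- One left-shift: either replace b ∈ X by b+1 ∈ A \ X, or add 1 when 1 ∈ A \ X. -/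
def leftShift (n : ℕ) (X Z : Finset ℕ) : Prop :=
  (∃ b ∈ X, b + 1 ∈ grnd n \ X ∧ Z = insert (b + 1) (X.erase b)) ∨
  (1 ∈ grnd n \ X ∧ Z = insert 1 X)

/-- The counting criterion for the shift order. -/
def shiftLE (n : ℕ) (X Z : Finset ℕ) : Prop :=
  ∀ a ∈ grnd n, cnt X a ≤ cnt Z a


lemma cnt_antitone (X : Finset ℕ) {a a' : ℕ} (h : a ≤ a') : cnt X a' ≤ cnt X a := by
  apply Finset.card_le_card
  intro x hx
  simp only [Finset.mem_filter] at *
  exact ⟨hx.1, le_trans h hx.2⟩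
  
lemma cnt_zero_of_gt {n : ℕ} {X : Finset ℕ} (hX : X ⊆ grnd n) {a : ℕ} (h : n < a) :
    cnt X a = 0 := by
  rw [cnt, Finset.card_eq_zero, Finset.filter_eq_empty_iff]
  intro x hx
  have := hX hx
  simp [grnd, Finset.mem_Icc] at this
  omega

lemma cnt_succ (X : Finset ℕ) (a : ℕ) :
    cnt X a = cnt X (a+1) + (if a ∈ X then 1 else 0) := by
  rw [cnt, cnt]
  have h1 : X.filter (fun b => a ≤ b) = X.filter (fun b => a + 1 ≤ b ∨ b = a) := by
    apply Finset.filter_congr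
    intro x _
    constructor <;> (intro; omega)
  rw [h1, Finset.filter_or, Finset.card_union_of_disjoint, Finset.filter_eq']
  · split <;> simp
  · rw [Finset.disjoint_left]
    intro x hx1 hx2
    simp only [Finset.mem_filter] at hx1 hx2
    omega

lemma cnt_insert_one {X : Finset ℕ} (h1 : 1 ∉ X) (a : ℕ) :
    cnt (insert 1 X) a = cnt X a + (if a ≤ 1 then 1 else 0) := by
  rw [cnt, cnt, Finset.filter_insert]
  split
  next h =>
    rw [Finset.card_insert_of_notMem (by simp [h1])]
  next h =>
    rw [Nat.add_zero]

lemma cnt_insert_shift {X : Finset ℕ} {b : ℕ} (hb : b ∈ X) (hb1 : b + 1 ∉ X) (a : ℕ) :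
    cnt (insert (b+1) (X.erase b)) a = cnt X a + (if a = b + 1 then 1 else 0) := by
  rw [cnt, cnt, Finset.filter_insert, Finset.filter_erase]
  by_cases h : a ≤ b + 1
  · rw [if_pos h, Finset.card_insert_of_notMem (by simp [hb1])]
    by_cases h2 : a ≤ b
    · rw [Finset.card_erase_of_mem (by simp [hb, h2]), if_neg (by omega)]
      have : 1 ≤ (Finset.filter (fun b_1 => a ≤ b_1) X).card :=
        Finset.card_pos.2 ⟨b, by simp [hb, h2]⟩
      omega
    · have ha : a = b + 1 := by omega
      rw [Finset.erase_eq_of_notMem (by simp; omega), if_pos ha]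
  · rw [if_neg h, Finset.erase_eq_of_notMem (by simp; omega), if_neg (by omega),
      Nat.add_zero]

lemma sum_cnt {n : ℕ} {X : Finset ℕ} (hX : X ⊆ grnd n) :
    ∑ a ∈ grnd n, cnt X a = ∑ b ∈ X, b := by
  have : ∀ a, cnt X a = ∑ b ∈ X, if a ≤ b then 1 else 0 := by
    intro a; rw [cnt, Finset.card_filter]
  simp_rw [this]
  rw [Finset.sum_comm]
  apply Finset.sum_congr rfl
  intro b hb
  have hb' := hX hb
  simp only [grnd, Finset.mem_Icc] at hb'
  rw [← Finset.card_filter]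
  have : Finset.filter (fun a => a ≤ b) (grnd n) = Finset.Icc 1 b := by
    ext x; simp [grnd, Finset.mem_Icc]; omega
  rw [this, Nat.card_Icc]
  omega

lemma cnt_ext {n : ℕ} {X Z : Finset ℕ} (hX : X ⊆ grnd n) (hZ : Z ⊆ grnd n)
    (h : ∀ a ∈ grnd n, cnt X a = cnt Z a) : X = Z := by
  have key : ∀ a, 1 ≤ a → cnt X a = cnt Z a := by
    intro a ha
    by_cases h2 : a ≤ n
    · exact h a (by simp [grnd, Finset.mem_Icc]; omega)
    · rw [cnt_zero_of_gt hX (by omega), cnt_zero_of_gt hZ (by omega)]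
  ext b
  rcases Nat.eq_zero_or_pos b with hb | hb
  · subst hb
    constructor <;> intro hm
    · exact absurd (hX hm) (by simp [grnd])
    · exact absurd (hZ hm) (by simp [grnd])
  · have e1 := cnt_succ X b
    have e2 := cnt_succ Z b
    have e3 := key b hb
    have e4 := key (b+1) (by omega)
    by_cases hbX : b ∈ X <;> by_cases hbZ : b ∈ Z <;> simp_all

lemma leftShift_subset {n : ℕ} {X Z : Finset ℕ} (hX : X ⊆ grnd n)
    (h : leftShift n X Z) : Z ⊆ grnd n := by
  rcases h with ⟨b, hb, hb1, rfl⟩ | ⟨h1, rfl⟩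
  · rw [Finset.mem_sdiff] at hb1
    exact Finset.insert_subset hb1.1 ((Finset.erase_subset _ _).trans hX)
  · rw [Finset.mem_sdiff] at h1
    exact Finset.insert_subset h1.1 hX

lemma leftShift_shiftLE {n : ℕ} {X Z : Finset ℕ} (h : leftShift n X Z) :
    shiftLE n X Z := by
  rcases h with ⟨b, hb, hb1, rfl⟩ | ⟨h1, rfl⟩
  · rw [Finset.mem_sdiff] at hb1
    intro a _
    rw [cnt_insert_shift hb hb1.2]
    omega
  · rw [Finset.mem_sdiff] at h1
    intro a _
    rw [cnt_insert_one h1.2]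
    omega

lemma forward {n : ℕ} {X Z : Finset ℕ} (h : Relation.ReflTransGen (leftShift n) X Z)
    (hX : X ⊆ grnd n) : Z ⊆ grnd n ∧ shiftLE n X Z := by
  induction h with
  | refl => exact ⟨hX, fun a _ => le_refl _⟩
  | tail hxy hyz ih =>
      obtain ⟨hY, hle⟩ := ih
      exact ⟨leftShift_subset hY hyz,
        fun a ha => le_trans (hle a ha) (leftShift_shiftLE hyz a ha)⟩

lemma eq_of_sum_eq {n : ℕ} {X Z : Finset ℕ} (hX : X ⊆ grnd n) (hZ : Z ⊆ grnd n)
    (hle : shiftLE n X Z) (heq : ∑ b ∈ X, b = ∑ b ∈ Z, b) : X = Z := by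
  apply cnt_ext hX hZ
  have h2 : ∑ a ∈ grnd n, cnt X a = ∑ a ∈ grnd n, cnt Z a := by
    rw [sum_cnt hX, sum_cnt hZ]; exact heq
  exact (Finset.sum_eq_sum_iff_of_le hle).1 h2

lemma cnt_congr_of_gap {X : Finset ℕ} {c m : ℕ} (hcm : c ≤ m)
    (hgap : ∀ x ∈ X, c ≤ x → m ≤ x) : cnt X c = cnt X m := by
  rw [cnt, cnt]
  congr 1
  apply Finset.filter_congr
  intro x hx
  exact ⟨fun h => hgap x hx h, fun h => le_trans hcm h⟩

lemma exists_max_filter {s : Finset ℕ} (p : ℕ → Prop) [DecidablePred p]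
    (h : (s.filter p).Nonempty) : ∃ m ∈ s, p m ∧ ∀ a ∈ s, p a → a ≤ m := by
  obtain ⟨m, hm, hmax⟩ := Finset.exists_max_image (s.filter p) id h
  rw [Finset.mem_filter] at hm
  exact ⟨m, hm.1, hm.2, fun a ha hpa => hmax a (Finset.mem_filter.2 ⟨ha, hpa⟩)⟩

lemma step {n : ℕ} {X Z : Finset ℕ} (hX : X ⊆ grnd n) (hZ : Z ⊆ grnd n)
    (hle : shiftLE n X Z) (hlt : ∑ b ∈ X, b < ∑ b ∈ Z, b) :
    ∃ X', leftShift n X X' ∧ X' ⊆ grnd n ∧ shiftLE n X' Z ∧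
      ∑ b ∈ X', b = (∑ b ∈ X, b) + 1 := by
  have hScnt : ∑ a ∈ grnd n, cnt X a < ∑ a ∈ grnd n, cnt Z a := by
    rw [sum_cnt hX, sum_cnt hZ]; exact hlt
  have hSne : ((grnd n).filter (fun a => cnt X a < cnt Z a)).Nonempty := by
    by_contra h
    rw [Finset.not_nonempty_iff_eq_empty, Finset.filter_eq_empty_iff] at h
    have : ∑ a ∈ grnd n, cnt Z a ≤ ∑ a ∈ grnd n, cnt X a :=
      Finset.sum_le_sum (fun a ha => by have := h ha; omega)
    omega
  obtain ⟨m, hmg, hmlt, hmax⟩ :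
      ∃ m, m ∈ grnd n ∧ cnt X m < cnt Z m ∧
        ∀ a ∈ grnd n, cnt X a < cnt Z a → a ≤ m :=
    exists_max_filter _ hSne
  have hmn : 1 ≤ m ∧ m ≤ n := by
    rw [grnd, Finset.mem_Icc] at hmg; exact hmg
  have hsucc : cnt X (m+1) = cnt Z (m+1) := by
    by_cases hc : m + 1 ≤ n
    · have hg : m + 1 ∈ grnd n := by rw [grnd, Finset.mem_Icc]; omega
      have h1 := hle (m+1) hg
      have h2 := hmax (m+1) hg
      omega
    · rw [cnt_zero_of_gt hX (by omega), cnt_zero_of_gt hZ (by omega)]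
  have hmX : m ∉ X := by
    intro hmem
    have e1 := cnt_succ X m
    have e2 := cnt_succ Z m
    by_cases hmZ : m ∈ Z <;> simp_all
  by_cases hA : (X.filter (fun x => x < m)).Nonempty
  · obtain ⟨b, hbX, hbm, hbmax⟩ :
        ∃ b ∈ X, b < m ∧ ∀ x ∈ X, x < m → x ≤ b :=
      exists_max_filter _ hA
    have hb1 : b + 1 ∉ X := by
      intro hc
      rcases Nat.lt_or_ge (b+1) m with h' | h'
      · have := hbmax (b+1) hc h'; omega
      · have : b + 1 = m := by omega
        rw [this] at hc; exact hmX hc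
    refine ⟨insert (b+1) (X.erase b), Or.inl ⟨b, hbX, ?_, rfl⟩, ?_, ?_, ?_⟩
    · rw [Finset.mem_sdiff]
      refine ⟨?_, hb1⟩
      rw [grnd, Finset.mem_Icc]; omega
    · intro x hx
      rcases Finset.mem_insert.1 hx with rfl | hx'
      · rw [grnd, Finset.mem_Icc]; omega
      · exact hX (Finset.mem_of_mem_erase hx')
    · intro a ha
      rw [cnt_insert_shift hbX hb1]
      by_cases hab : a = b + 1
      · subst hab
        have hgap : cnt X (b+1) = cnt X m := by
          apply cnt_congr_of_gap (by omega)
          intro x hx hbx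
          by_contra hxm
          have := hbmax x hx (by omega)
          omega
        have := cnt_antitone Z (show b + 1 ≤ m by omega)
        rw [if_pos rfl]
        omega
      · rw [if_neg hab, Nat.add_zero]; exact hle a ha
    · rw [Finset.sum_insert (by simp [hb1])]
      have h2 := Finset.add_sum_erase X (fun x => x) hbX
      omega
  · rw [Finset.not_nonempty_iff_eq_empty, Finset.filter_eq_empty_iff] at hA
    have h1X : 1 ∉ X := by
      intro hc
      have := hA hc
      have h1 : m = 1 := by omega
      rw [h1] at hmX; exact hmX hc
    refine ⟨insert 1 X, Or.inr ⟨?_, rfl⟩, ?_, ?_, ?_⟩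
    · rw [Finset.mem_sdiff]
      refine ⟨?_, h1X⟩
      rw [grnd, Finset.mem_Icc]; omega
    · exact Finset.insert_subset (by rw [grnd, Finset.mem_Icc]; omega) hX
    · intro a ha
      rw [cnt_insert_one h1X]
      by_cases ha1 : a ≤ 1
      · have ha2 : 1 ≤ a := by rw [grnd, Finset.mem_Icc] at ha; omega
        have ha3 : a = 1 := by omega
        subst ha3
        have hgap : cnt X 1 = cnt X m := by
          apply cnt_congr_of_gap (by omega)
          intro x hx _
          have := hA hx; omega
        have := cnt_antitone Z (show 1 ≤ m by omega)
        rw [if_pos (le_refl 1)]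
        omega
      · rw [if_neg ha1, Nat.add_zero]; exact hle a ha
    · rw [Finset.sum_insert h1X]; omega

lemma backward {n : ℕ} {Z : Finset ℕ} (hZ : Z ⊆ grnd n) :
    ∀ k (X : Finset ℕ), X ⊆ grnd n → shiftLE n X Z →
      (∑ b ∈ Z, b) - (∑ b ∈ X, b) ≤ k →
      Relation.ReflTransGen (leftShift n) X Z := by
  intro k
  induction k with
  | zero =>
    intro X hX hle hd
    have hs : ∑ a ∈ grnd n, cnt X a ≤ ∑ a ∈ grnd n, cnt Z a :=
      Finset.sum_le_sum hle
    rw [sum_cnt hX, sum_cnt hZ] at hs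
    rw [eq_of_sum_eq hX hZ hle (by omega)]
  | succ k ih =>
    intro X hX hle hd
    have hs : ∑ a ∈ grnd n, cnt X a ≤ ∑ a ∈ grnd n, cnt Z a :=
      Finset.sum_le_sum hle
    rw [sum_cnt hX, sum_cnt hZ] at hs
    rcases Nat.lt_or_ge (∑ b ∈ X, b) (∑ b ∈ Z, b) with hlt | hge
    · obtain ⟨X', hshift, hX', hle', hsum⟩ := step hX hZ hle hlt
      exact Relation.ReflTransGen.head hshift (ih X' hX' hle' (by omega))
    · rw [eq_of_sum_eq hX hZ hle (by omega)]

theorem stmt9 (n : ℕ) (X Z : Finset ℕ) (hX : X ⊆ grnd n) (hZ : Z ⊆ grnd n) :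
    Relation.ReflTransGen (leftShift n) X Z ↔ shiftLE n X Z := by
  constructor
  · exact fun h => (forward h hX).2
  · exact fun h => backward hZ _ X hX h (le_refl _)
end

section
/- If (A, W) is a regular game (W = ν'(W) with respect to the shift order on A = {1,...,n}), then τ(W) = τ'(W), where τ(W) := {Z : ∀ X ∈ W, X ⊄ A \ Z} and τ'(W) := {Z : ∀ X ∈ W, ¬(X ⊆' A \ Z)}; consequently the dual game (A, τ(W)) is also regular. -/
def nu' (n : ℕ) (H : Set (Finset ℕ)) : Set (Finset ℕ) :=
  {Z | Z ⊆ grnd n ∧ ∃ X ∈ H, shiftLE n X Z}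

/-- τ(H) within P(A). -/
def tauA (n : ℕ) (H : Set (Finset ℕ)) : Set (Finset ℕ) :=
  {Z | Z ⊆ grnd n ∧ ∀ X ∈ H, (X ∩ Z).Nonempty}

/-- τ'(H) within P(A). -/
def tau' (n : ℕ) (H : Set (Finset ℕ)) : Set (Finset ℕ) :=
  {Z | Z ⊆ grnd n ∧ ∀ X ∈ H, ¬ shiftLE n X (grnd n \ Z)}

theorem stmt13 (n : ℕ) (W : Set (Finset ℕ))
    (hsub : ∀ X ∈ W, X ⊆ grnd n)
    (hreg : nu' n W = W) :
    tauA n W = tau' n W ∧ nu' n (tauA n W) = tauA n W := by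
  have hmono : ∀ X Z : Finset ℕ, X ⊆ Z → shiftLE n X Z := by
    intro X Z h a _
    exact Finset.card_le_card (Finset.filter_subset_filter _ h)
  have hcompl : ∀ Z : Finset ℕ, Z ⊆ grnd n → ∀ a,
      cnt (grnd n \ Z) a + cnt Z a = cnt (grnd n) a := by
    intro Z hZ a
    unfold cnt
    have hfeq : (grnd n \ Z).filter (fun b => a ≤ b)
        = (grnd n).filter (fun b => a ≤ b) \ Z.filter (fun b => a ≤ b) := by
      ext b
      simp only [Finset.mem_filter, Finset.mem_sdiff]
      tauto
    rw [hfeq, Finset.card_sdiff_of_subset (Finset.filter_subset_filter _ hZ)]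
    have := Finset.card_le_card (Finset.filter_subset_filter (fun b => a ≤ b) hZ)
    omega
  have hrev : ∀ X Z : Finset ℕ, X ⊆ grnd n → Z ⊆ grnd n → shiftLE n X Z →
      shiftLE n (grnd n \ Z) (grnd n \ X) := by
    intro X Z hX hZ h a ha
    have h1 := hcompl X hX a
    have h2 := hcompl Z hZ a
    have := h a ha
    omega
  have htrans : ∀ X Y Z : Finset ℕ, shiftLE n X Y → shiftLE n Y Z → shiftLE n X Z := by
    intro X Y Z h1 h2 a ha
    exact le_trans (h1 a ha) (h2 a ha)
  have heq : tauA n W = tau' n W := by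
    ext Z
    constructor
    · rintro ⟨hZ, hne⟩
      refine ⟨hZ, fun X hX hle => ?_⟩
      have hmem : grnd n \ Z ∈ nu' n W := ⟨Finset.sdiff_subset, X, hX, hle⟩
      rw [hreg] at hmem
      have := hne _ hmem
      rcases this with ⟨b, hb⟩
      rw [Finset.mem_inter, Finset.mem_sdiff] at hb
      exact hb.1.2 hb.2
    · rintro ⟨hZ, hns⟩
      refine ⟨hZ, fun X hX => ?_⟩
      by_contra h
      rw [Finset.not_nonempty_iff_eq_empty] at h
      apply hns X hX
      apply hmono
      intro b hb
      rw [Finset.mem_sdiff]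
      refine ⟨hsub X hX hb, fun hbZ => ?_⟩
      have : b ∈ X ∩ Z := Finset.mem_inter.mpr ⟨hb, hbZ⟩
      simp [h] at this
  refine ⟨heq, ?_⟩
  ext Z
  constructor
  · rintro ⟨hZ, Y, hY, hle⟩
    rw [heq] at hY
    obtain ⟨hYsub, hYns⟩ := hY
    refine ⟨hZ, fun X hX => ?_⟩
    by_contra h
    rw [Finset.not_nonempty_iff_eq_empty] at h
    apply hYns X hX
    have hXsub : X ⊆ grnd n \ Z := by
      intro b hb
      rw [Finset.mem_sdiff]
      refine ⟨hsub X hX hb, fun hbZ => ?_⟩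
      have : b ∈ X ∩ Z := Finset.mem_inter.mpr ⟨hb, hbZ⟩
      simp [h] at this
    exact htrans _ _ _ (hmono _ _ hXsub) (hrev _ _ hYsub hZ hle)
  · intro hZ
    exact ⟨hZ.1, Z, hZ, fun a ha => le_refl _⟩
end

section
/- Define T : P({1,...,n}) → P({1,...,2n}) by: 2a ∈ T(X) iff a ∈ X, and 2a−1 ∈ T(X) iff a ∉ X. Then T is injective, and for all X, Z ⊆ {1,...,n}, X ⊆ Z if and only if T(X) ⊆' T(Z), where ⊆' is the shift order on subsets of {1,...,2n}. -/
/-- The monomorphism T : P({1,...,n}) → P({1,...,2n}). -/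
def Tmap (n : ℕ) (X : Finset ℕ) : Finset ℕ :=
  X.image (fun a => 2 * a) ∪ (grnd n \ X).image (fun a => 2 * a - 1)

lemma mem_T_even (n : ℕ) (X : Finset ℕ) (a : ℕ) :
    2 * a ∈ Tmap n X ↔ a ∈ X := by
  simp only [Tmap, Finset.mem_union, Finset.mem_image, Finset.mem_sdiff, grnd, Finset.mem_Icc]
  constructor
  · rintro (⟨b, hb, he⟩ | ⟨b, ⟨⟨hb1, _⟩, _⟩, he⟩)
    · have : b = a := by omega
      subst this; exact hb
    · omega
  · intro h; exact Or.inl ⟨a, h, rfl⟩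

lemma sdiff_filter_card {n : ℕ} {X : Finset ℕ} (hX : X ⊆ grnd n)
    (p : ℕ → Prop) [DecidablePred p] :
    ((grnd n \ X).filter p).card = ((grnd n).filter p).card - (X.filter p).card := by
  have h1 : (grnd n \ X).filter p = (grnd n).filter p \ X.filter p := by
    ext b
    simp only [Finset.mem_filter, Finset.mem_sdiff]
    tauto
  rw [h1, Finset.card_sdiff_of_subset (Finset.filter_subset_filter p hX)]

lemma grnd_filter_lt_card (n k : ℕ) :
    ((grnd n).filter (fun b => k < b)).card = n - k := by
  have : (grnd n).filter (fun b => k < b) = Finset.Icc (k + 1) n := by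
    ext b
    simp only [grnd, Finset.mem_filter, Finset.mem_Icc]
    omega
  rw [this, Nat.card_Icc]
  omega

lemma grnd_filter_le_card (n k : ℕ) (hk : 1 ≤ k) :
    ((grnd n).filter (fun b => k ≤ b)).card = n + 1 - k := by
  have : (grnd n).filter (fun b => k ≤ b) = Finset.Icc k n := by
    ext b
    simp only [grnd, Finset.mem_filter, Finset.mem_Icc]
    omega
  rw [this, Nat.card_Icc]

lemma cnt_split (X : Finset ℕ) (k : ℕ) :
    (X.filter (fun b => k ≤ b)).card
      = (X.filter (fun b => k < b)).card + (if k ∈ X then 1 else 0) := by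
  have h1 : X.filter (fun b => k ≤ b)
      = X.filter (fun b => k < b) ∪ X.filter (fun b => b = k) := by
    ext b
    simp only [Finset.mem_filter, Finset.mem_union]
    constructor
    · rintro ⟨hb, h⟩
      rcases eq_or_lt_of_le h with h | h
      · exact Or.inr ⟨hb, h.symm⟩
      · exact Or.inl ⟨hb, h⟩
    · rintro (⟨hb, h⟩ | ⟨hb, h⟩) <;> exact ⟨hb, by omega⟩
  rw [h1, Finset.card_union_of_disjoint, Finset.filter_eq']
  · split <;> simp
  · rw [Finset.disjoint_left]
    intro b hb hb'
    simp only [Finset.mem_filter] at hb hb'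
    omega

lemma cnt_T (n : ℕ) (X : Finset ℕ) (a : ℕ) :
    cnt (Tmap n X) a =
      (X.filter (fun b => a ≤ 2 * b)).card
        + ((grnd n \ X).filter (fun b => a ≤ 2 * b - 1)).card := by
  have hinj1 : Function.Injective (fun a : ℕ => 2 * a) := by
    intro x y h; simp only at h; omega
  have hinj2 : Function.Injective (fun a : ℕ => 2 * a - 1) := by
    intro x y h; simp only at h; omega
  have hdisj : Disjoint (Finset.filter (fun b => a ≤ b) (X.image (fun a => 2 * a)))
      (Finset.filter (fun b => a ≤ b) ((grnd n \ X).image (fun a => 2 * a - 1))) := by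
    rw [Finset.disjoint_left]
    intro x hx hx'
    simp only [Finset.mem_filter, Finset.mem_image, Finset.mem_sdiff, grnd,
      Finset.mem_Icc] at hx hx'
    obtain ⟨⟨b, _, hb⟩, _⟩ := hx
    obtain ⟨⟨c, ⟨⟨hc1, _⟩, _⟩, hc⟩, _⟩ := hx'
    omega
  unfold cnt Tmap
  rw [Finset.filter_union, Finset.card_union_of_disjoint hdisj,
    Finset.filter_image, Finset.filter_image,
    Finset.card_image_of_injective _ hinj1, Finset.card_image_of_injective _ hinj2]

lemma cnt_T_even (n : ℕ) (X : Finset ℕ) (hX : X ⊆ grnd n) (k : ℕ)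
    (_hk1 : 1 ≤ k) (hk2 : k ≤ n) :
    cnt (Tmap n X) (2 * k) = (n - k) + (if k ∈ X then 1 else 0) := by
  rw [cnt_T]
  have e1 : X.filter (fun b => 2 * k ≤ 2 * b) = X.filter (fun b => k ≤ b) := by
    apply Finset.filter_congr; intro b _; constructor <;> (intro; omega)
  have e2 : (grnd n \ X).filter (fun b => 2 * k ≤ 2 * b - 1)
      = (grnd n \ X).filter (fun b => k < b) := by
    apply Finset.filter_congr
    intro b hb
    simp only [Finset.mem_sdiff, grnd, Finset.mem_Icc] at hb
    constructor <;> (intro; omega)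
  rw [e1, e2, sdiff_filter_card hX, grnd_filter_lt_card, cnt_split]
  have hle : (X.filter (fun b => k < b)).card ≤ n - k := by
    rw [← grnd_filter_lt_card n k]
    exact Finset.card_le_card (Finset.filter_subset_filter _ hX)
  omega

lemma cnt_T_odd (n : ℕ) (X : Finset ℕ) (hX : X ⊆ grnd n) (k : ℕ)
    (hk1 : 1 ≤ k) (hk2 : k ≤ n) :
    cnt (Tmap n X) (2 * k - 1) = n + 1 - k := by
  rw [cnt_T]
  have e1 : X.filter (fun b => 2 * k - 1 ≤ 2 * b) = X.filter (fun b => k ≤ b) := by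
    apply Finset.filter_congr; intro b _; constructor <;> (intro; omega)
  have e2 : (grnd n \ X).filter (fun b => 2 * k - 1 ≤ 2 * b - 1)
      = (grnd n \ X).filter (fun b => k ≤ b) := by
    apply Finset.filter_congr
    intro b hb
    simp only [Finset.mem_sdiff, grnd, Finset.mem_Icc] at hb
    constructor <;> (intro; omega)
  rw [e1, e2, sdiff_filter_card hX, grnd_filter_le_card n k hk1]
  have hle : (X.filter (fun b => k ≤ b)).card ≤ n + 1 - k := by
    rw [← grnd_filter_le_card n k hk1]
    exact Finset.card_le_card (Finset.filter_subset_filter _ hX)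
  omega

theorem stmt15 (n : ℕ) :
    (∀ X Z : Finset ℕ, X ⊆ grnd n → Z ⊆ grnd n → Tmap n X = Tmap n Z → X = Z) ∧
    (∀ X Z : Finset ℕ, X ⊆ grnd n → Z ⊆ grnd n →
      (X ⊆ Z ↔ shiftLE (2 * n) (Tmap n X) (Tmap n Z))) := by
  constructor
  · intro X Z _ _ h
    ext a
    rw [← mem_T_even n X a, ← mem_T_even n Z a, h]
  · intro X Z hX hZ
    constructor
    · intro hXZ a ha
      simp only [grnd, Finset.mem_Icc] at ha
      rcases Nat.even_or_odd a with ⟨m, hm⟩ | ⟨m, hm⟩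
      · -- a = m + m = 2 * m
        have ha' : a = 2 * m := by omega
        have hm1 : 1 ≤ m := by omega
        have hm2 : m ≤ n := by omega
        rw [ha', cnt_T_even n X hX m hm1 hm2, cnt_T_even n Z hZ m hm1 hm2]
        by_cases hmX : m ∈ X
        · have hmZ : m ∈ Z := hXZ hmX
          simp [hmX, hmZ]
        · simp only [hmX, if_false]
          split <;> omega
      · -- a = 2 * m + 1 = 2 * (m + 1) - 1
        have ha' : a = 2 * (m + 1) - 1 := by omega
        have hm1 : 1 ≤ m + 1 := by omega
        have hm2 : m + 1 ≤ n := by omega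
        rw [ha', cnt_T_odd n X hX (m + 1) hm1 hm2, cnt_T_odd n Z hZ (m + 1) hm1 hm2]
    · intro h k hk
      have hk' := hX hk
      simp only [grnd, Finset.mem_Icc] at hk'
      have h2k : 2 * k ∈ grnd (2 * n) := by
        simp only [grnd, Finset.mem_Icc]; omega
      have := h (2 * k) h2k
      rw [cnt_T_even n X hX k hk'.1 hk'.2, cnt_T_even n Z hZ k hk'.1 hk'.2] at this
      simp only [hk, if_true] at this
      by_contra hkZ
      simp only [hkZ, if_false] at this
      omega
end
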